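/- Let ϱ be a positive integer with binary digits d_ℓ. If for some k ≥ 1 the pair (d_{k−1}, d_k) equals (0,1) or (1,0), then |cos(π ϱ / 2^{k+1})| ≤ √2/2. -/

import Mathlib

/-! Modulo `2^(k+1)`, a digit change at positions `k - 1, k` puts `ϱ` in `[2^(k-1), 3·2^(k-1))`,
so `π ϱ / 2^(k+1)` lies in `[π/4, 3π/4]` modulo `π`, where `|cos| ≤ √2/2`. -/

open Real

lemma Nat.mod_four_eq_one_or_two_of_testBit_zero_ne_testBit_one {a : ℕ}
    (h : a.testBit 0 ≠ a.testBit 1) : a % 4 = 1 ∨ a % 4 = 2 := by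
  simp only [Nat.testBit_succ, Nat.testBit_zero, ne_eq, decide_eq_decide] at h
  omega

lemma Nat.two_pow_le_mod_of_testBit_ne {n k : ℕ} (h : n.testBit k ≠ n.testBit (k + 1)) :
    2 ^ k ≤ n % 2 ^ (k + 2) ∧ n % 2 ^ (k + 2) < 3 * 2 ^ k := by
  have hdigits : (n / 2 ^ k).testBit 0 ≠ (n / 2 ^ k).testBit 1 := by
    rwa [Nat.testBit_div_two_pow, Nat.testBit_div_two_pow, zero_add, add_comm]
  replace hdigits := Nat.mod_four_eq_one_or_two_of_testBit_zero_ne_testBit_one hdigits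
  have hlow : n % 2 ^ k < 2 ^ k := Nat.mod_lt _ (Nat.two_pow_pos k)
  rw [pow_add, Nat.mod_mul, show 2 ^ 2 = 4 from rfl]
  rcases hdigits with hd | hd <;> rw [hd] <;> omega

lemma abs_cos_pi_mul_div_natCast_eq_mod (n N : ℕ) :
    |cos (π * n / N)| = |cos (π * (n % N : ℕ) / N)| := by
  rcases Nat.eq_zero_or_pos N with rfl | hN
  · simp
  have hsplit : π * n / N = π * (n % N : ℕ) / N + (n / N : ℕ) * π := by
    conv_lhs => rw [← Nat.mod_add_div n N]
    push_cast
    field_simp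
  rw [hsplit, cos_add_nat_mul_pi, abs_mul, abs_pow, abs_neg, abs_one, one_pow, one_mul]

lemma abs_cos_le_sqrt_two_div_two {x : ℝ} (h₁ : π / 4 ≤ x) (h₂ : x ≤ 3 * π / 4) :
    |cos x| ≤ √2 / 2 := by
  have hcos : cos (2 * x) ≤ 0 := cos_nonpos_of_pi_div_two_le_of_le (by linarith) (by linarith)
  calc |cos x| ≤ √2⁻¹ := abs_le_sqrt (by rw [cos_sq]; linarith)
    _ = √2 / 2 := by rw [sqrt_inv, ← sqrt_div_self]

theorem cos_bound_of_digit_change (ϱ k : ℕ)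
    (hchange : ϱ.testBit (k - 1) ≠ ϱ.testBit k) :
    |Real.cos (Real.pi * ϱ / 2 ^ (k + 1))| ≤ Real.sqrt 2 / 2 := by
  obtain ⟨j, rfl⟩ : ∃ j, k = j + 1 :=
    Nat.exists_eq_add_one.mpr (Nat.pos_of_ne_zero (by rintro rfl; exact hchange rfl))
  rw [Nat.add_sub_cancel] at hchange
  obtain ⟨hlo, hhi⟩ := Nat.two_pow_le_mod_of_testBit_ne hchange
  have hlo' : (2 : ℝ) ^ j ≤ (ϱ % 2 ^ (j + 2) : ℕ) := by exact_mod_cast hlo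
  have hhi' : ((ϱ % 2 ^ (j + 2) : ℕ) : ℝ) ≤ 3 * 2 ^ j := by exact_mod_cast hhi.le
  have hden : (2 : ℝ) ^ (j + 1 + 1) = (2 ^ (j + 2) : ℕ) := by push_cast; ring
  rw [hden, abs_cos_pi_mul_div_natCast_eq_mod]
  have hpow : ((2 ^ (j + 2) : ℕ) : ℝ) = 4 * 2 ^ j := by push_cast; ring
  have hπ := pi_pos
  apply abs_cos_le_sqrt_two_div_two
  · rw [le_div_iff₀ (by positivity), hpow]; nlinarith
  · rw [div_le_iff₀ (by positivity), hpow]; nlinarith
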